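/- arXiv:2602.10841 — 4 statements merged into one kernel-verified Lean document; each statement's English description precedes it below -/
import Mathlib

section
/- For any constants α₁, α₂ ∈ [0,1) and any t, λ > 0, one has ∫₀ᵗ s^{-α₁}(t-s)^{-α₂} e^{-λ(t-s)} ds ≤ (1/(1-α₁)) t^{-α₁} ∫₀ᵗ s^{-α₂} e^{-λ s} ds. -/
/-!
On `(0, t)` the weight `s ↦ s^(-α₁)` is decreasing and `s ↦ (t - s)^(-α₂) e^(-λ(t - s))` is
increasing, so by Chebyshev's integral inequality the mean of their product is at most the
product of their means. The first mean is `t^(-α₁) / (1 - α₁)`, and the reflection `s ↦ t - s`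
turns the second into `t⁻¹ ∫₀ᵗ s^(-α₂) e^(-λ s) ds`.
-/

open MeasureTheory Set

theorem AntivaryOn.measureReal_mul_setIntegral_mul_le {α : Type*} [MeasurableSpace α]
    {μ : Measure α} {s : Set α} {f g : α → ℝ} (hfg : AntivaryOn f g s) (hs : MeasurableSet s)
    (hμs : μ s ≠ ⊤) (hf : IntegrableOn f s μ) (hg : IntegrableOn g s μ)
    (hfg_int : IntegrableOn (fun x => f x * g x) s μ) :
    μ.real s * ∫ x in s, f x * g x ∂μ ≤ (∫ x in s, f x ∂μ) * ∫ x in s, g x ∂μ := by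
  set ν := μ.restrict s
  have : IsFiniteMeasure ν := isFiniteMeasure_restrict.2 hμs
  have hnonpos : ∫ z, (f z.1 - f z.2) * (g z.1 - g z.2) ∂ν.prod ν ≤ 0 := by
    refine integral_nonpos_of_ae ?_
    filter_upwards [Measure.quasiMeasurePreserving_fst.ae (ae_restrict_mem hs),
      Measure.quasiMeasurePreserving_snd.ae (ae_restrict_mem hs)] with z hz₁ hz₂
    exact hfg.sub_mul_sub_nonpos hz₂ hz₁
  have hexpand : ∫ z, (f z.1 - f z.2) * (g z.1 - g z.2) ∂ν.prod ν =
      2 * (μ.real s * ∫ x, f x * g x ∂ν - (∫ x, f x ∂ν) * ∫ x, g x ∂ν) := by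
    have e : (fun z : α × α => (f z.1 - f z.2) * (g z.1 - g z.2)) = fun z =>
        (f z.1 * g z.1 + f z.2 * g z.2) - (f z.1 * g z.2 + g z.1 * f z.2) := by
      ext z; ring
    rw [e, integral_sub ((hfg_int.comp_fst ν).fun_add (hfg_int.comp_snd ν))
        ((hf.mul_prod hg).fun_add (hg.mul_prod hf)),
      integral_add (hfg_int.comp_fst ν) (hfg_int.comp_snd ν),
      integral_add (hf.mul_prod hg) (hg.mul_prod hf), integral_prod_mul, integral_prod_mul,
      integral_fun_fst (fun x => f x * g x), integral_fun_snd (fun x => f x * g x),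
      smul_eq_mul, measureReal_restrict_apply_univ]
    ring
  linarith

theorem integrableOn_Ioo_comp_sub_left_iff {E : Type*} [NormedAddCommGroup E] {f : ℝ → E}
    {t : ℝ} : IntegrableOn (fun s => f (t - s)) (Ioo 0 t) ↔ IntegrableOn f (Ioo 0 t) := by
  have := (Measure.measurePreserving_sub_left volume t).integrableOn_comp_preimage
    (MeasurableEquiv.subLeft t).measurableEmbedding (f := f) (s := Ioo 0 t)
  rwa [preimage_const_sub_Ioo, sub_self, sub_zero] at this

theorem setIntegral_Ioo_comp_sub_left {E : Type*} [NormedAddCommGroup E] [NormedSpace ℝ E]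
    (f : ℝ → E) (t : ℝ) : ∫ s in Ioo 0 t, f (t - s) = ∫ s in Ioo 0 t, f s := by
  have := (Measure.measurePreserving_sub_left volume t).setIntegral_preimage_emb
    (MeasurableEquiv.subLeft t).measurableEmbedding f (Ioo 0 t)
  rwa [preimage_const_sub_Ioo, sub_self, sub_zero] at this

theorem integrableOn_Ioo_mul_of_continuousOn {μ : Measure ℝ} {a b : ℝ} {f g : ℝ → ℝ}
    (hf : IntegrableOn f (Ioo a b) μ) (hg : IntegrableOn g (Ioo a b) μ)
    (hfc : ContinuousOn f (Ioc a b)) (hgc : ContinuousOn g (Ico a b)) :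
    IntegrableOn (fun x => f x * g x) (Ioo a b) μ := by
  rcases le_or_gt b a with hba | hab
  · simp [Ioo_eq_empty_of_le hba]
  obtain ⟨m, ham, hmb⟩ := exists_between hab
  rw [← Ioc_union_Ioo_eq_Ioo ham.le hmb]
  refine IntegrableOn.union ?_ ?_
  · exact (hf.mono_set (Ioc_subset_Ioo_right hmb)).mul_continuousOn_of_subset
      (hgc.mono (Icc_subset_Ico_right hmb)) measurableSet_Ioc isCompact_Icc Ioc_subset_Icc_self
  · exact IntegrableOn.continuousOn_mul_of_subset (hfc.mono (Icc_subset_Ioc_left ham))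
      (hg.mono_set (Ioo_subset_Ioo_left ham.le)) isCompact_Icc measurableSet_Ioo
      Ioo_subset_Icc_self

theorem integral_Ioo_zero_rpow {r t : ℝ} (hr : -1 < r) (ht : 0 ≤ t) :
    ∫ s in Ioo 0 t, s ^ r = t ^ (r + 1) / (r + 1) := by
  rw [← integral_Ioc_eq_integral_Ioo, ← intervalIntegral.integral_of_le ht, integral_rpow (.inl hr),
    Real.zero_rpow (by linarith), sub_zero]

theorem antitoneOn_rpow_neg_mul_exp {α l : ℝ} (hα : 0 ≤ α) (hl : 0 ≤ l) :
    AntitoneOn (fun u => u ^ (-α) * Real.exp (-l * u)) (Ioi 0) := fun x hx y _ hxy =>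
  mul_le_mul (Real.rpow_le_rpow_of_nonpos hx hxy (by linarith))
    (Real.exp_le_exp.2 (by nlinarith)) (Real.exp_nonneg _) (Real.rpow_nonneg hx.le _)

theorem integrableOn_Ioo_rpow_neg_mul_exp {α t : ℝ} (hα : α < 1) (ht : 0 < t) (l : ℝ) :
    IntegrableOn (fun u => u ^ (-α) * Real.exp (-l * u)) (Ioo 0 t) :=
  ((intervalIntegral.integrableOn_Ioo_rpow_iff ht).2 (by linarith)).mul_continuousOn_of_subset
    (by fun_prop) measurableSet_Ioo isCompact_Icc Ioo_subset_Icc_self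

/-- FKG step: for `α₁, α₂ ∈ [0,1)` and `t, λ > 0`,
`∫₀ᵗ s^{-α₁}(t-s)^{-α₂} e^{-λ(t-s)} ds ≤ (1/(1-α₁)) t^{-α₁} ∫₀ᵗ s^{-α₂} e^{-λ s} ds`. -/
theorem stmt0 (α₁ α₂ t l : ℝ) (h1 : α₁ ∈ Set.Ico (0:ℝ) 1) (h2 : α₂ ∈ Set.Ico (0:ℝ) 1)
    (ht : 0 < t) (hl : 0 < l) :
    ∫ s in Set.Ioc (0:ℝ) t, s ^ (-α₁) * ((t - s) ^ (-α₂) * Real.exp (-l * (t - s))) ≤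
      (1 / (1 - α₁)) * t ^ (-α₁) * ∫ s in Set.Ioc (0:ℝ) t, s ^ (-α₂) * Real.exp (-l * s) := by
  obtain ⟨hα₁, hα₁'⟩ := h1
  obtain ⟨hα₂, hα₂'⟩ := h2
  set h : ℝ → ℝ := fun u => u ^ (-α₂) * Real.exp (-l * u)
  have hf : IntegrableOn (fun s => s ^ (-α₁)) (Ioo 0 t) :=
    (intervalIntegral.integrableOn_Ioo_rpow_iff ht).2 (by linarith)
  have hg : IntegrableOn (fun s => h (t - s)) (Ioo 0 t) :=
    integrableOn_Ioo_comp_sub_left_iff.2 (integrableOn_Ioo_rpow_neg_mul_exp hα₂' ht l)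
  have hf_cont : ContinuousOn (fun s => s ^ (-α₁)) (Ioc 0 t) := fun s hs =>
    (Real.continuousAt_rpow_const _ _ (.inl hs.1.ne')).continuousWithinAt
  have hg_cont : ContinuousOn (fun s => h (t - s)) (Ico 0 t) := fun s hs =>
    ((Real.continuousAt_rpow_const _ _ (.inl (sub_pos.2 hs.2).ne')).comp (by fun_prop)).mul
      (by fun_prop) |>.continuousWithinAt
  have hfg : AntivaryOn (fun s => s ^ (-α₁)) (fun s => h (t - s)) (Ioo 0 t) :=
    ((Real.antitoneOn_rpow_Ioi_of_exponent_nonpos (by linarith)).mono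
      Ioo_subset_Ioi_self).antivaryOn fun x hx y hy hxy =>
        antitoneOn_rpow_neg_mul_exp hα₂ hl.le (sub_pos.2 hy.2) (sub_pos.2 hx.2) (by linarith)
  have key := hfg.measureReal_mul_setIntegral_mul_le measurableSet_Ioo (by simp) hf hg
    (integrableOn_Ioo_mul_of_continuousOn hf hg hf_cont hg_cont)
  rw [Real.volume_real_Ioo_of_le ht.le, sub_zero, integral_Ioo_zero_rpow (by linarith) ht.le,
    setIntegral_Ioo_comp_sub_left h, ← integral_Ioc_eq_integral_Ioo,
    ← integral_Ioc_eq_integral_Ioo, Real.rpow_add_one ht.ne', neg_add_eq_sub] at key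
  have hα₁_pos : 0 < 1 - α₁ := by linarith
  refine le_of_mul_le_mul_left (key.trans_eq ?_) ht
  field_simp
end

section
/- Let α₂ ∈ [0,1) and α ∈ [0, 1-α₂). Then there exists a constant c = α^α ((1-α)/(1-α-α₂))^{1-α} such that for all t, λ > 0, ∫₀ᵗ s^{-α₂} e^{-λ s} ds ≤ c · t^{1-α-α₂} · λ^{-α}. -/
open MeasureTheory

/-!
Hölder's inequality with exponents `1/(1-α)` and `1/α`, applied to
`s^{-α₂} e^{-λ s} = (s^{-α₂/(1-α)})^{1-α} (e^{-(λ/α) s})^α`, splits the integral into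
`(∫₀ᵗ s^{-α₂/(1-α)} ds)^{1-α} = ((1-α)/(1-α-α₂))^{1-α} t^{1-α-α₂}` and
`(∫₀ᵗ e^{-(λ/α) s} ds)^α ≤ (α/λ)^α`.
-/

section Holder

variable {X : Type*} [MeasurableSpace X] {μ : Measure X}

theorem integral_le_integral_rpow_mul_integral_rpow {f g h : X → ℝ} {p q : ℝ}
    (hp : 0 ≤ p) (hq : 0 ≤ q) (hpq : p + q = 1)
    (hf : Integrable f μ) (hg : Integrable g μ) (hf0 : 0 ≤ᵐ[μ] f) (hg0 : 0 ≤ᵐ[μ] g)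
    (hh : AEStronglyMeasurable h μ) (hh0 : 0 ≤ᵐ[μ] h)
    (hle : h ≤ᵐ[μ] fun a => f a ^ p * g a ^ q) :
    ∫ a, h a ∂μ ≤ (∫ a, f a ∂μ) ^ p * (∫ a, g a ∂μ) ^ q := by
  have hF := (lintegral_ofReal_ne_top_iff_integrable hf.1 hf0).mpr hf
  have hG := (lintegral_ofReal_ne_top_iff_integrable hg.1 hg0).mpr hg
  have key : ∫⁻ a, ENNReal.ofReal (h a) ∂μ ≤
      (∫⁻ a, ENNReal.ofReal (f a) ∂μ) ^ p * (∫⁻ a, ENNReal.ofReal (g a) ∂μ) ^ q := by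
    refine le_trans (lintegral_mono_ae ?_)
      (ENNReal.lintegral_mul_norm_pow_le hf.1.aemeasurable.ennreal_ofReal
        hg.1.aemeasurable.ennreal_ofReal hp hq hpq)
    filter_upwards [hle, hf0, hg0] with a ha hfa hga
    rw [ENNReal.ofReal_rpow_of_nonneg hfa hp, ENNReal.ofReal_rpow_of_nonneg hga hq,
      ← ENNReal.ofReal_mul (Real.rpow_nonneg hfa p)]
    exact ENNReal.ofReal_le_ofReal ha
  rw [integral_eq_lintegral_of_nonneg_ae hh0 hh, integral_eq_lintegral_of_nonneg_ae hf0 hf.1,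
    integral_eq_lintegral_of_nonneg_ae hg0 hg.1, ENNReal.toReal_rpow, ENNReal.toReal_rpow,
    ← ENNReal.toReal_mul]
  exact ENNReal.toReal_mono (ENNReal.mul_ne_top (ENNReal.rpow_ne_top_of_nonneg hp hF)
    (ENNReal.rpow_ne_top_of_nonneg hq hG)) key

end Holder

namespace Real

theorem exp_le_rpow_exp_div {x α : ℝ} (hx : x ≤ 0) (hα : 0 ≤ α) :
    exp x ≤ exp (x / α) ^ α := by
  rcases hα.eq_or_lt with rfl | hα
  · simpa using hx
  · rw [← exp_mul, div_mul_cancel₀ x hα.ne']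

theorem integrableOn_Ioc_rpow {r t : ℝ} (hr : -1 < r) (ht : 0 ≤ t) :
    IntegrableOn (fun s => s ^ r) (Set.Ioc 0 t) :=
  (intervalIntegrable_iff_integrableOn_Ioc_of_le ht).mp
    (intervalIntegral.intervalIntegrable_rpow' hr)

theorem setIntegral_Ioc_rpow {r t : ℝ} (hr : -1 < r) (ht : 0 ≤ t) :
    ∫ s in Set.Ioc 0 t, s ^ r = t ^ (r + 1) / (r + 1) := by
  rw [← intervalIntegral.integral_of_le ht, integral_rpow (Or.inl hr),
    zero_rpow (by linarith), sub_zero]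

theorem rpow_setIntegral_Ioc_rpow_neg_div {a b t : ℝ} (hab : a < b) (hb : 0 < b) (ht : 0 ≤ t) :
    (∫ s in Set.Ioc 0 t, s ^ (-a / b)) ^ b = t ^ (b - a) * (b / (b - a)) ^ b := by
  have hr : -1 < -a / b := by rw [lt_div_iff₀ hb]; linarith
  rw [setIntegral_Ioc_rpow hr ht, show -a / b + 1 = (b - a) / b by field_simp; ring,
    div_div_eq_mul_div, mul_div_assoc,
    mul_rpow (rpow_nonneg ht _) (div_nonneg hb.le (sub_pos.2 hab).le), ← rpow_mul ht,
    div_mul_cancel₀ _ hb.ne']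

theorem setIntegral_Ioc_exp_neg_mul_le {c : ℝ} (hc : 0 < c) (t : ℝ) :
    ∫ s in Set.Ioc 0 t, exp (-c * s) ≤ c⁻¹ := by
  have hIoi : ∫ s in Set.Ioi 0, exp (-c * s) = c⁻¹ := by
    rw [integral_exp_mul_Ioi (neg_neg_of_pos hc)]
    simp
  rw [← hIoi]
  exact setIntegral_mono_set (integrableOn_exp_mul_Ioi (neg_neg_of_pos hc) 0)
    (Filter.Eventually.of_forall fun _ => (exp_pos _).le) Set.Ioc_subset_Ioi_self.eventuallyLE

-- For `α = 0` the integrand is `exp 0 = 1` (as `l / 0 = 0`), and both sides are `1`.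
theorem rpow_setIntegral_Ioc_exp_neg_div_mul_le {α l : ℝ} (hα : 0 ≤ α) (hl : 0 < l)
    (t : ℝ) : (∫ s in Set.Ioc 0 t, exp (-(l / α) * s)) ^ α ≤ α ^ α * l ^ (-α) := by
  rcases hα.eq_or_lt with rfl | hα
  · simp
  calc (∫ s in Set.Ioc 0 t, exp (-(l / α) * s)) ^ α ≤ (α / l) ^ α := by
        gcongr
        simpa using setIntegral_Ioc_exp_neg_mul_le (div_pos hl hα) t
    _ = α ^ α * l ^ (-α) := by rw [div_rpow hα.le hl.le, rpow_neg hl.le, div_eq_mul_inv]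

theorem rpow_neg_mul_exp_neg_mul_le {a b c l s : ℝ} (hs : 0 < s) (hl : 0 ≤ l) (hb : 0 < b)
    (hc : 0 ≤ c) : s ^ (-a) * exp (-l * s) ≤ (s ^ (-a / b)) ^ b * exp (-(l / c) * s) ^ c := by
  rw [← rpow_mul hs.le, div_mul_cancel₀ _ hb.ne', show -(l / c) * s = -l * s / c by ring]
  exact mul_le_mul_of_nonneg_left (exp_le_rpow_exp_div (by nlinarith) hc) (rpow_nonneg hs.le _)

end Real

open Set Real in
/-- Hölder step: for `α₂ ∈ [0,1)`, `α ∈ [0, 1-α₂)` and `t, λ > 0`,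
`∫₀ᵗ s^{-α₂} e^{-λ s} ds ≤ α^α ((1-α)/(1-α-α₂))^{1-α} t^{1-α-α₂} λ^{-α}`. -/
theorem stmt1 (α₂ α : ℝ) (h2 : α₂ ∈ Set.Ico (0:ℝ) 1) (hα : α ∈ Set.Ico (0:ℝ) (1 - α₂))
    (t l : ℝ) (ht : 0 < t) (hl : 0 < l) :
    ∫ s in Set.Ioc (0:ℝ) t, s ^ (-α₂) * Real.exp (-l * s) ≤
      α ^ α * ((1 - α) / (1 - α - α₂)) ^ (1 - α) * (t ^ (1 - α - α₂) * l ^ (-α)) := by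
  obtain ⟨hα₂0, -⟩ := h2
  obtain ⟨hα0, hαα₂⟩ := hα
  have h1α : 0 < 1 - α := by linarith
  have hr : -1 < -α₂ / (1 - α) := by rw [lt_div_iff₀ h1α]; linarith
  have hC : 0 ≤ (1 - α) / (1 - α - α₂) := div_nonneg h1α.le (by linarith)
  calc ∫ s in Ioc 0 t, s ^ (-α₂) * exp (-l * s)
      ≤ (∫ s in Ioc 0 t, s ^ (-α₂ / (1 - α))) ^ (1 - α) *
          (∫ s in Ioc 0 t, exp (-(l / α) * s)) ^ α :=
        integral_le_integral_rpow_mul_integral_rpow h1α.le hα0 (by ring)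
          (integrableOn_Ioc_rpow hr ht.le) (by fun_prop : Continuous _).integrableOn_Ioc
          (ae_restrict_of_forall_mem measurableSet_Ioc fun s hs => rpow_nonneg hs.1.le _)
          (ae_of_all _ fun _ => (exp_pos _).le)
          (by fun_prop : Measurable _).aestronglyMeasurable
          (ae_restrict_of_forall_mem measurableSet_Ioc fun s hs =>
            mul_nonneg (rpow_nonneg hs.1.le _) (exp_pos _).le)
          (ae_restrict_of_forall_mem measurableSet_Ioc fun s hs =>
            rpow_neg_mul_exp_neg_mul_le hs.1 hl.le h1α hα0)
    _ ≤ t ^ (1 - α - α₂) * ((1 - α) / (1 - α - α₂)) ^ (1 - α) *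
          (α ^ α * l ^ (-α)) := by
        rw [rpow_setIntegral_Ioc_rpow_neg_div (by linarith) h1α ht.le]
        exact mul_le_mul_of_nonneg_left (rpow_setIntegral_Ioc_exp_neg_div_mul_le hα0 hl t)
          (mul_nonneg (rpow_nonneg ht.le _) (rpow_nonneg hC _))
    _ = α ^ α * ((1 - α) / (1 - α - α₂)) ^ (1 - α) * (t ^ (1 - α - α₂) * l ^ (-α)) := by
        ring
end

section
/- Let α₁, α₂ ∈ [0,1) and α ∈ [0, 1-α₂]. Then there exists a constant c(α, α₁, α₂) ∈ (0,∞) such that for all t, λ > 0, ∫₀ᵗ s^{-α₁}(t-s)^{-α₂} e^{-λ(t-s)} ds ≤ c(α, α₁, α₂) · t^{1-α-α₁-α₂} · λ^{-α}. -/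
/-!
Split the integral at `s = t / 2`. Near `s = 0` the kernel `(t - s) ^ (-α₂) * exp (-l * (t - s))`
is at most `(t / 2) ^ (-α₂) * exp (-l * t / 2)`, and `exp (-x) ≲ x ^ (-α)` produces the factor
`l ^ (-α)`. Near `s = t` the factor `s ^ (-α₁)` is at most `(t / 2) ^ (-α₁)`, and what remains is
`∫₀ᵗ u ^ (-α₂) * exp (-l * u) du`, which is bounded both by `t ^ (1 - α₂) / (1 - α₂)` and by
`Γ(1 - α₂) * l ^ (α₂ - 1)`; interpolating between the two bounds gives `t ^ (1 - α₂ - α) * l ^ (-α)`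
for every `α ∈ [0, 1 - α₂]`, including the endpoint.
-/

open MeasureTheory Set Real

lemma rpow_le_mul_exp {a x : ℝ} (ha : 0 ≤ a) (hx : 0 ≤ x) :
    x ^ a ≤ (a + 1) ^ a * exp x := by
  have hb : 0 < a + 1 := by linarith
  have hxb : x / (a + 1) ≤ exp (x / (a + 1)) := by linarith [add_one_le_exp (x / (a + 1))]
  calc x ^ a = (a + 1) ^ a * (x / (a + 1)) ^ a := by
        rw [div_rpow hx hb.le, mul_div_cancel₀ _ (rpow_pos_of_pos hb a).ne']
    _ ≤ (a + 1) ^ a * exp (x / (a + 1)) ^ a := by gcongr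
    _ = (a + 1) ^ a * exp (x * (a / (a + 1))) := by rw [← exp_mul, mul_div_assoc']; ring_nf
    _ ≤ (a + 1) ^ a * exp x := by
        gcongr
        exact mul_le_of_le_one_right hx ((div_le_one hb).2 (by linarith))

lemma exp_neg_le_mul_rpow_neg {a x : ℝ} (ha : 0 ≤ a) (hx : 0 < x) :
    exp (-x) ≤ (a + 1) ^ a * x ^ (-a) := by
  rw [exp_neg, rpow_neg hx.le, ← div_eq_mul_inv, inv_le_iff_one_le_mul₀ (exp_pos x),
    div_mul_eq_mul_div, one_le_div (rpow_pos_of_pos hx a)]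
  exact rpow_le_mul_exp ha hx.le

lemma min_le_rpow_mul_rpow {A B θ : ℝ} (hA : 0 ≤ A) (hB : 0 ≤ B) (hθ0 : 0 ≤ θ) (hθ1 : θ ≤ 1) :
    min A B ≤ A ^ (1 - θ) * B ^ θ := by
  have hm : 0 ≤ min A B := le_min hA hB
  calc min A B = min A B ^ (1 - θ) * min A B ^ θ := by
        rw [← rpow_add' hm (by norm_num), sub_add_cancel, rpow_one]
    _ ≤ A ^ (1 - θ) * B ^ θ :=
        mul_le_mul (rpow_le_rpow hm (min_le_left A B) (by linarith))
          (rpow_le_rpow hm (min_le_right A B) hθ0) (rpow_nonneg hm θ) (rpow_nonneg hA _)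

lemma setIntegral_Ioc_comp_sub_left (f : ℝ → ℝ) {t : ℝ} (ht : 0 ≤ t) :
    ∫ s in Ioc 0 t, f (t - s) = ∫ u in Ioc 0 t, f u := by
  rw [← intervalIntegral.integral_of_le ht, ← intervalIntegral.integral_of_le ht,
    intervalIntegral.integral_comp_sub_left, sub_self, sub_zero]

section

variable {β t l : ℝ}

lemma integrableOn_Ioc_rpow_neg (hβ : β < 1) (ht : 0 ≤ t) :
    IntegrableOn (fun u : ℝ ↦ u ^ (-β)) (Ioc 0 t) :=
  (intervalIntegrable_iff_integrableOn_Ioc_of_le ht).1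
    (intervalIntegral.intervalIntegrable_rpow' (by linarith))

lemma setIntegral_Ioc_rpow_neg (hβ : β < 1) (ht : 0 ≤ t) :
    ∫ u in Ioc 0 t, u ^ (-β) = t ^ (1 - β) / (1 - β) := by
  rw [← intervalIntegral.integral_of_le ht, integral_rpow (Or.inl (by linarith)),
    zero_rpow (by linarith), sub_zero, neg_add_eq_sub]

lemma integrableOn_rpow_neg_mul_exp_neg_mul (hβ : β < 1) (hl : 0 < l) :
    IntegrableOn (fun u : ℝ ↦ u ^ (-β) * exp (-l * u)) (Ioi 0) := by
  simpa only [rpow_one] using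
    integrableOn_rpow_mul_exp_neg_mul_rpow (s := -β) (by linarith) one_pos hl

lemma setIntegral_Ioc_rpow_neg_mul_exp_le_rpow (hβ : β < 1) (ht : 0 ≤ t) (hl : 0 ≤ l) :
    ∫ u in Ioc 0 t, u ^ (-β) * exp (-l * u) ≤ t ^ (1 - β) / (1 - β) := by
  rw [← setIntegral_Ioc_rpow_neg hβ ht]
  refine integral_mono_of_nonneg ?_ (integrableOn_Ioc_rpow_neg hβ ht) ?_ <;>
    filter_upwards [ae_restrict_mem measurableSet_Ioc] with u hu
  · exact mul_nonneg (rpow_nonneg hu.1.le _) (exp_pos _).le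
  · exact mul_le_of_le_one_right (rpow_nonneg hu.1.le _) (exp_le_one_iff.2 (by nlinarith [hu.1]))

lemma setIntegral_Ioc_rpow_neg_mul_exp_le_Gamma (hβ : β < 1) (hl : 0 < l) :
    ∫ u in Ioc 0 t, u ^ (-β) * exp (-l * u) ≤ Gamma (1 - β) * l ^ (β - 1) := by
  calc ∫ u in Ioc 0 t, u ^ (-β) * exp (-l * u)
      ≤ ∫ u in Ioi 0, u ^ (-β) * exp (-l * u) := by
        refine setIntegral_mono_set (integrableOn_rpow_neg_mul_exp_neg_mul hβ hl) ?_
          Ioc_subset_Ioi_self.eventuallyLE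
        filter_upwards [ae_restrict_mem measurableSet_Ioi] with u hu
        exact mul_nonneg (rpow_nonneg (le_of_lt hu) _) (exp_pos _).le
    _ = (1 / l) ^ (1 - β) * Gamma (1 - β) := by
        rw [← integral_rpow_mul_exp_neg_mul_Ioi (by linarith) hl]
        simp only [sub_sub_cancel_left, neg_mul]
    _ = Gamma (1 - β) * l ^ (β - 1) := by
        rw [one_div, inv_rpow hl.le, ← rpow_neg hl.le, neg_sub, mul_comm]

/-- For `α < 1 - β` the pointwise bound `exp (-x) ≲ x ^ (-α)` would suffice; at the endpoint
`α = 1 - β` it leaves the non-integrable `u ^ (-1)`, hence the interpolation. -/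
theorem setIntegral_Ioc_rpow_neg_mul_exp_le (hβ : β < 1) {α : ℝ} (hα0 : 0 ≤ α)
    (hα : α ≤ 1 - β) :
    ∃ C, 0 < C ∧ ∀ t l : ℝ, 0 < t → 0 < l →
      ∫ u in Ioc 0 t, u ^ (-β) * exp (-l * u) ≤ C * (t ^ (1 - β - α) * l ^ (-α)) := by
  have hβ' : 0 < 1 - β := by linarith
  set θ := α / (1 - β)
  have hθ : (1 - β) * θ = α := mul_div_cancel₀ α hβ'.ne'
  have hΓ : 0 < Gamma (1 - β) := Gamma_pos_of_pos hβ'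
  refine ⟨(1 / (1 - β)) ^ (1 - θ) * Gamma (1 - β) ^ θ, by positivity, fun t l ht hl ↦ ?_⟩
  calc ∫ u in Ioc 0 t, u ^ (-β) * exp (-l * u)
      ≤ min (t ^ (1 - β) / (1 - β)) (Gamma (1 - β) * l ^ (β - 1)) :=
        le_min (setIntegral_Ioc_rpow_neg_mul_exp_le_rpow hβ ht.le hl.le)
          (setIntegral_Ioc_rpow_neg_mul_exp_le_Gamma hβ hl)
    _ ≤ (t ^ (1 - β) / (1 - β)) ^ (1 - θ) * (Gamma (1 - β) * l ^ (β - 1)) ^ θ :=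
        min_le_rpow_mul_rpow (by positivity) (by positivity) (div_nonneg hα0 hβ'.le)
          ((div_le_one hβ').2 hα)
    _ = _ := by
        rw [div_eq_mul_one_div, mul_rpow (by positivity) (by positivity),
          mul_rpow hΓ.le (by positivity), ← rpow_mul ht.le, ← rpow_mul hl.le,
          show (1 - β) * (1 - θ) = 1 - β - α by linarith, show (β - 1) * θ = -α by linarith]
        ring

end

lemma div_two_rpow {t : ℝ} (ht : 0 ≤ t) (x : ℝ) : (t / 2) ^ x = 2 ^ (-x) * t ^ x := by
  rw [div_rpow ht zero_le_two, rpow_neg zero_le_two, div_eq_inv_mul]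

section

variable {α₁ α₂ t l : ℝ}

/-- Either `s ≥ t / 2` or `t - s ≥ t / 2`, so one of the two singular factors is harmless. -/
lemma rpow_mul_rpow_mul_exp_le_add (h1 : 0 ≤ α₁) (h2 : 0 ≤ α₂) (hl : 0 ≤ l) {s : ℝ}
    (hs : 0 < s) (hst : s ≤ t) :
    s ^ (-α₁) * ((t - s) ^ (-α₂) * exp (-l * (t - s))) ≤
      (t / 2) ^ (-α₁) * ((t - s) ^ (-α₂) * exp (-l * (t - s))) +
        (t / 2) ^ (-α₂) * exp (-l * (t / 2)) * s ^ (-α₁) := by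
  have ht : 0 < t := hs.trans_le hst
  have hts : 0 ≤ t - s := by linarith
  rcases le_total (t / 2) s with hs2 | hs2
  · calc _ ≤ (t / 2) ^ (-α₁) * ((t - s) ^ (-α₂) * exp (-l * (t - s))) :=
          mul_le_mul_of_nonneg_right (rpow_le_rpow_of_nonpos (by positivity) hs2 (by linarith))
            (by positivity)
      _ ≤ _ := le_add_of_nonneg_right (by positivity)
  · calc _ ≤ s ^ (-α₁) * ((t / 2) ^ (-α₂) * exp (-l * (t / 2))) := by
          gcongr ?_ * (?_ * ?_)
          · exact rpow_le_rpow_of_nonpos (by positivity) (by linarith) (by linarith)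
          · exact exp_le_exp.2 (by nlinarith)
      _ = (t / 2) ^ (-α₂) * exp (-l * (t / 2)) * s ^ (-α₁) := by ring
      _ ≤ _ := le_add_of_nonneg_left (by positivity)

lemma setIntegral_Ioc_rpow_mul_rpow_mul_exp_le (h1 : 0 ≤ α₁) (h1' : α₁ < 1)
    (h2 : 0 ≤ α₂) (h2' : α₂ < 1) (ht : 0 < t) (hl : 0 < l) :
    ∫ s in Ioc 0 t, s ^ (-α₁) * ((t - s) ^ (-α₂) * exp (-l * (t - s))) ≤
      (t / 2) ^ (-α₁) * (∫ u in Ioc 0 t, u ^ (-α₂) * exp (-l * u)) +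
        (t / 2) ^ (-α₂) * exp (-l * (t / 2)) * (t ^ (1 - α₁) / (1 - α₁)) := by
  set G : ℝ → ℝ := fun u ↦ u ^ (-α₂) * exp (-l * u)
  have hG : IntegrableOn (fun s ↦ G (t - s)) (Ioc 0 t) := by
    have := (integrableOn_rpow_neg_mul_exp_neg_mul h2' hl).mono_set
      (Ioc_subset_Ioi_self : Ioc 0 t ⊆ Ioi 0)
    rw [← intervalIntegrable_iff_integrableOn_Ioc_of_le ht.le] at this ⊢
    simpa only [sub_zero, sub_self] using (this.comp_sub_left t).symm
  have hR := integrableOn_Ioc_rpow_neg h1' ht.le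
  calc _ ≤ ∫ s in Ioc 0 t, ((t / 2) ^ (-α₁) * G (t - s) +
          (t / 2) ^ (-α₂) * exp (-l * (t / 2)) * s ^ (-α₁)) := by
        refine integral_mono_of_nonneg ?_ ((hG.const_mul _).add (hR.const_mul _)) ?_ <;>
          filter_upwards [ae_restrict_mem measurableSet_Ioc] with s hs
        · have := rpow_nonneg hs.1.le (-α₁)
          have := rpow_nonneg (sub_nonneg.2 hs.2) (-α₂)
          positivity
        · exact rpow_mul_rpow_mul_exp_le_add h1 h2 hl.le hs.1 hs.2
    _ = _ := by
        rw [integral_add (hG.const_mul _) (hR.const_mul _), integral_const_mul, integral_const_mul,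
          setIntegral_Ioc_comp_sub_left G ht.le, setIntegral_Ioc_rpow_neg h1' ht.le]

end

/-- The key singular Gronwall-type inequality (3.1): for `α₁, α₂ ∈ [0,1)` and
`α ∈ [0, 1-α₂]`, there is `c = c(α,α₁,α₂) ∈ (0,∞)` such that for all `t, λ > 0`,
`∫₀ᵗ s^{-α₁}(t-s)^{-α₂} e^{-λ(t-s)} ds ≤ c t^{1-α-α₁-α₂} λ^{-α}`. -/
theorem stmt3 (α₁ α₂ α : ℝ) (h1 : α₁ ∈ Set.Ico (0:ℝ) 1) (h2 : α₂ ∈ Set.Ico (0:ℝ) 1)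
    (hα : α ∈ Set.Icc (0:ℝ) (1 - α₂)) :
    ∃ c : ℝ, 0 < c ∧ ∀ t l : ℝ, 0 < t → 0 < l →
      ∫ s in Set.Ioc (0:ℝ) t, s ^ (-α₁) * ((t - s) ^ (-α₂) * Real.exp (-l * (t - s))) ≤
        c * (t ^ (1 - α - α₁ - α₂) * l ^ (-α)) := by
  obtain ⟨h1, h1'⟩ := h1
  obtain ⟨h2, h2'⟩ := h2
  obtain ⟨hα0, hα⟩ := hα
  obtain ⟨C, hC, hint⟩ := setIntegral_Ioc_rpow_neg_mul_exp_le h2' hα0 hα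
  have hα₁ : 0 < 1 - α₁ := by linarith
  set K := (α + 1) ^ α
  refine ⟨2 ^ α₁ * C + 2 ^ α₂ * 2 ^ α * K / (1 - α₁), by positivity, fun t l ht hl ↦ ?_⟩
  have hexp : exp (-l * (t / 2)) ≤ K * (l * (t / 2)) ^ (-α) := by
    rw [neg_mul]; exact exp_neg_le_mul_rpow_neg hα0 (by positivity)
  have htp (a b : ℝ) : t ^ (a + b) = t ^ a * t ^ b := rpow_add ht a b
  calc _ ≤ (t / 2) ^ (-α₁) * (C * (t ^ (1 - α₂ - α) * l ^ (-α))) +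
        (t / 2) ^ (-α₂) * (K * (l * (t / 2)) ^ (-α)) * (t ^ (1 - α₁) / (1 - α₁)) := by
        refine (setIntegral_Ioc_rpow_mul_rpow_mul_exp_le h1 h1' h2 h2' ht hl).trans ?_
        gcongr
        exact hint t l ht hl
    _ = _ := by
        rw [mul_rpow hl.le (by positivity), div_two_rpow ht.le, div_two_rpow ht.le,
          div_two_rpow ht.le, neg_neg, neg_neg, neg_neg,
          show 1 - α - α₁ - α₂ = 1 + -α + -α₁ + -α₂ by ring,
          show 1 - α₂ - α = 1 + -α₂ + -α by ring, sub_eq_add_neg 1 α₁]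
        simp only [htp, rpow_one]
        field_simp
end

section
/- Let δ ∈ [0,∞), k ∈ [1,∞]. The set 𝒫_{δ,k*} of probability measures μ on ℝᵈ with ‖μ‖_{δ,k*} := sup{|μ(f)| : f bounded measurable, ‖f‖_{W̃^{-δ,k}} ≤ 1} < ∞ is a complete metric space under the distance (μ,ν) ↦ ‖μ-ν‖_{δ,k*}. -/
/-
The operator `(1-Δ)^{-δ/2}`, written through the heat semigroup, averages `f` against
probability kernels, so it does not increase `sup |f|`; hence
`‖f‖_{W̃^{-δ,k}} ≤ vol(B₁)^{1/k} sup |f|` and the dual distance dominates the total variation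
distance. A `‖·‖_{δ,k*}`-Cauchy sequence of probability measures is therefore Cauchy in total
variation, so its densities with respect to the dominating probability measure `∑ 2^{-n-1} μₙ`
are Cauchy in `L¹`; their limit is again a probability density, whose measure `ν` is the limit
of `μₙ` against every bounded measurable function. Passing to the limit inside the supremum
gives `‖μₙ - ν‖_{δ,k*} → 0`, and the triangle inequality gives `‖ν‖_{δ,k*} < ∞`.
-/

open MeasureTheory ENNReal

noncomputable def tildeNorm (d : ℕ) (k : ℝ≥0∞) {F : Type*} [NormedAddCommGroup F]
    (f : EuclideanSpace ℝ (Fin d) → F) : ℝ≥0∞ :=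
  ⨆ z : EuclideanSpace ℝ (Fin d),
    eLpNorm ((Metric.closedBall z 1).indicator f) k volume

/-- The heat semigroup `P_t⁰ f(x) = (2πt)^{-d/2} ∫ e^{-|x-y|²/(2t)} f(y) dy` on `ℝᵈ`. -/
noncomputable def heatSem (d : ℕ) {F : Type*} [NormedAddCommGroup F] [NormedSpace ℝ F]
    (t : ℝ) (f : EuclideanSpace ℝ (Fin d) → F) (x : EuclideanSpace ℝ (Fin d)) : F :=
  (2 * Real.pi * t) ^ (-(d : ℝ) / 2) •
    ∫ y, Real.exp (-‖x - y‖ ^ 2 / (2 * t)) • f y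

/-- `(1-Δ)^{-δ/2}` via the subordination formula (identity for `δ = 0`). -/
noncomputable def bessel (d : ℕ) {F : Type*} [NormedAddCommGroup F] [NormedSpace ℝ F]
    (δ : ℝ) (f : EuclideanSpace ℝ (Fin d) → F) : EuclideanSpace ℝ (Fin d) → F :=
  if δ = 0 then f else fun x =>
    (Real.Gamma (δ / 2))⁻¹ •
      ∫ t in Set.Ioi (0:ℝ), (t ^ (δ / 2 - 1) * Real.exp (-t)) • heatSem d t f x

/-- The local negative Sobolev norm `‖f‖_{W̃^{-δ,k}}`. -/
noncomputable def tildeSobNorm (d : ℕ) (δ : ℝ) (k : ℝ≥0∞) {F : Type*}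
    [NormedAddCommGroup F] [NormedSpace ℝ F]
    (f : EuclideanSpace ℝ (Fin d) → F) : ℝ≥0∞ :=
  tildeNorm d k (bessel d δ f)

/-- `‖μ‖_{δ,k*}`, the dual norm of a measure against the `W̃^{-δ,k}` unit ball of
bounded measurable functions. -/
noncomputable def dualNorm (d : ℕ) (δ : ℝ) (k : ℝ≥0∞)
    (μ : Measure (EuclideanSpace ℝ (Fin d))) : ℝ≥0∞ :=
  ⨆ (f : EuclideanSpace ℝ (Fin d) → ℝ) (_ : Measurable f) (_ : ∃ M, ∀ x, |f x| ≤ M)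
    (_ : tildeSobNorm d δ k f ≤ 1), ENNReal.ofReal |∫ x, f x ∂μ|

/-- `‖μ-ν‖_{δ,k*}`. -/
noncomputable def dualDist (d : ℕ) (δ : ℝ) (k : ℝ≥0∞)
    (μ ν : Measure (EuclideanSpace ℝ (Fin d))) : ℝ≥0∞ :=
  ⨆ (f : EuclideanSpace ℝ (Fin d) → ℝ) (_ : Measurable f) (_ : ∃ M, ∀ x, |f x| ≤ M)
    (_ : tildeSobNorm d δ k f ≤ 1), ENNReal.ofReal |∫ x, f x ∂μ - ∫ x, f x ∂ν|

open Filter Topology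

section SetwiseCauchy

variable {Ω : Type*} [MeasurableSpace Ω] {π α β : Measure Ω}

lemma isProbabilityMeasure_sum_geometric (μ : ℕ → Measure Ω) [∀ n, IsProbabilityMeasure (μ n)] :
    IsProbabilityMeasure (Measure.sum fun n => (2⁻¹ : ℝ≥0∞) ^ (n + 1) • μ n) := by
  constructor
  simp [Measure.sum_apply _ MeasurableSet.univ, ENNReal.tsum_geometric_add_one,
    ENNReal.inv_mul_cancel]

lemma exists_integral_abs_sub_toReal_rnDeriv_eq [SigmaFinite π] [IsProbabilityMeasure α]
    [IsProbabilityMeasure β] (hα : α ≪ π) (hβ : β ≪ π) :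
    ∃ s, MeasurableSet s ∧ ∫ x, |(α.rnDeriv π x).toReal - (β.rnDeriv π x).toReal| ∂π
      = 2 * (α.real s - β.real s) := by
  set g := fun x => (α.rnDeriv π x).toReal
  set h := fun x => (β.rnDeriv π x).toReal
  have hg : Integrable g π := Measure.integrable_toReal_rnDeriv
  have hh : Integrable h π := Measure.integrable_toReal_rnDeriv
  -- Scheffé: split `∫ |g - h|` along the set where `g` dominates.
  set s := {x | h x ≤ g x}
  have hs : MeasurableSet s :=
    measurableSet_le (Measure.measurable_rnDeriv β π).ennreal_toReal
      (Measure.measurable_rnDeriv α π).ennreal_toReal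
  refine ⟨s, hs, ?_⟩
  have hsplit := integral_add_compl (f := fun x => |g x - h x|) hs (hg.sub hh).abs
  rw [setIntegral_congr_fun hs fun x (hx : h x ≤ g x) => abs_of_nonneg (sub_nonneg.2 hx),
    setIntegral_congr_fun hs.compl fun x (hx : ¬ h x ≤ g x) =>
      abs_of_neg (sub_neg.2 (not_le.1 hx)),
    integral_neg, integral_sub hg.integrableOn hh.integrableOn,
    integral_sub hg.integrableOn hh.integrableOn, Measure.setIntegral_toReal_rnDeriv hα,
    Measure.setIntegral_toReal_rnDeriv hβ, Measure.setIntegral_toReal_rnDeriv hα,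
    Measure.setIntegral_toReal_rnDeriv hβ, probReal_compl_eq_one_sub hs,
    probReal_compl_eq_one_sub hs] at hsplit
  linarith

lemma abs_integral_sub_le_mul_integral_abs_sub_toReal_rnDeriv [SigmaFinite π]
    [IsFiniteMeasure α] [IsFiniteMeasure β] (hα : α ≪ π) (hβ : β ≪ π) {f : Ω → ℝ} {M : ℝ}
    (hf : Measurable f) (hfM : ∀ x, |f x| ≤ M) :
    |∫ x, f x ∂α - ∫ x, f x ∂β|
      ≤ M * ∫ x, |(α.rnDeriv π x).toReal - (β.rnDeriv π x).toReal| ∂π := by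
  set g := fun x => (α.rnDeriv π x).toReal
  set h := fun x => (β.rnDeriv π x).toReal
  have hg : Integrable g π := Measure.integrable_toReal_rnDeriv
  have hh : Integrable h π := Measure.integrable_toReal_rnDeriv
  have hfM' : ∀ᵐ x ∂π, ‖f x‖ ≤ M := .of_forall hfM
  rw [← integral_toReal_rnDeriv_mul hα, ← integral_toReal_rnDeriv_mul hβ,
    ← integral_sub (hg.mul_bdd hf.aestronglyMeasurable hfM')
      (hh.mul_bdd hf.aestronglyMeasurable hfM'),
    ← integral_const_mul, ← Real.norm_eq_abs]
  refine norm_integral_le_of_norm_le ((hg.sub hh).abs.const_mul M) (.of_forall fun x => ?_)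
  rw [← sub_mul, norm_mul, Real.norm_eq_abs, Real.norm_eq_abs, mul_comm]
  exact mul_le_mul_of_nonneg_right (hfM x) (abs_nonneg _)

lemma isProbabilityMeasure_withDensity_ofReal {G : Ω →₁[π] ℝ} (hG : 0 ≤ G)
    (hG1 : ∫ x, G x ∂π = 1) : IsProbabilityMeasure (π.withDensity fun x => .ofReal (G x)) := by
  constructor
  rw [withDensity_apply _ MeasurableSet.univ, Measure.restrict_univ,
    ← ofReal_integral_eq_lintegral_ofReal (L1.integrable_coeFn G) ((Lp.coeFn_nonneg G).2 hG),
    hG1, ENNReal.ofReal_one]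

lemma toReal_rnDeriv_withDensity_ofReal [SigmaFinite π] {G : Ω →₁[π] ℝ} (hG : 0 ≤ G) :
    (fun x => ((π.withDensity fun x => .ofReal (G x)).rnDeriv π x).toReal) =ᵐ[π] G := by
  filter_upwards [Measure.rnDeriv_withDensity π (Lp.stronglyMeasurable G).measurable.ennreal_ofReal,
    (Lp.coeFn_nonneg G).2 hG] with x hx hx0
  rw [hx, ENNReal.toReal_ofReal hx0]

theorem exists_tendsto_integral_of_cauchy_on_sets (μ : ℕ → Measure Ω)
    [∀ n, IsProbabilityMeasure (μ n)]
    (hμ : ∀ ε > 0, ∃ N, ∀ m ≥ N, ∀ n ≥ N, ∀ s, MeasurableSet s →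
      (μ m).real s - (μ n).real s ≤ ε) :
    ∃ ν : Measure Ω, IsProbabilityMeasure ν ∧ ∀ f : Ω → ℝ, Measurable f →
      (∃ M, ∀ x, |f x| ≤ M) →
      Tendsto (fun n => ∫ x, f x ∂μ n) atTop (𝓝 (∫ x, f x ∂ν)) := by
  set π := Measure.sum fun n => (2⁻¹ : ℝ≥0∞) ^ (n + 1) • μ n
  have := isProbabilityMeasure_sum_geometric μ
  have hac : ∀ n, μ n ≪ π := fun n =>
    Measure.absolutelyContinuous_sum_right n (Measure.absolutelyContinuous_smul (by simp))
  set g := fun n x => ((μ n).rnDeriv π x).toReal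
  let G : ℕ → Ω →₁[π] ℝ := fun n => (Measure.integrable_toReal_rnDeriv (μ := μ n)).toL1 (g n)
  have hdist : ∀ (n : ℕ) (H : Ω →₁[π] ℝ) (h : Ω → ℝ), h =ᵐ[π] H →
      ∫ x, |g n x - h x| ∂π = dist (G n) H := fun n H h hH => by
    rw [L1.dist_eq_integral_dist]
    refine integral_congr_ae ?_
    filter_upwards [Integrable.coeFn_toL1 (Measure.integrable_toReal_rnDeriv (μ := μ n)), hH]
      with x hx hHx
    rw [hx, hHx, Real.dist_eq]
  have hcauchy : CauchySeq G := by
    refine Metric.cauchySeq_iff.2 fun ε hε => ?_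
    obtain ⟨N, hN⟩ := hμ (ε / 4) (by positivity)
    refine ⟨N, fun m hm n hn => ?_⟩
    obtain ⟨s, hs, hmn⟩ := exists_integral_abs_sub_toReal_rnDeriv_eq (hac m) (hac n)
    rw [← hdist m (G n) (g n) (Integrable.coeFn_toL1 _).symm]
    linarith [hN m hm n hn s hs]
  obtain ⟨G', hG'⟩ := cauchySeq_tendsto_of_complete hcauchy
  have hG'0 : 0 ≤ G' := ge_of_tendsto' hG' fun n => (Lp.coeFn_nonneg _).1 <|
    (Integrable.coeFn_toL1 _).mono fun x hx => hx.symm ▸ ENNReal.toReal_nonneg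
  have hG'1 : ∫ x, G' x ∂π = 1 := by
    refine tendsto_nhds_unique ((continuous_integral.tendsto G').comp hG') ?_
    refine tendsto_const_nhds.congr fun n => ?_
    change 1 = ∫ x, G n x ∂π
    rw [integral_congr_ae (Integrable.coeFn_toL1 _), Measure.integral_toReal_rnDeriv (hac n),
      probReal_univ]
  have := isProbabilityMeasure_withDensity_ofReal hG'0 hG'1
  refine ⟨_, this, fun f hf ⟨M, hM⟩ => ?_⟩
  rw [tendsto_iff_dist_tendsto_zero]
  refine squeeze_zero (fun n => dist_nonneg) (fun n => ?_)
    (by simpa using (tendsto_iff_dist_tendsto_zero.1 hG').const_mul M)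
  rw [Real.dist_eq, ← hdist n G' _ (toReal_rnDeriv_withDensity_ofReal hG'0)]
  exact abs_integral_sub_le_mul_integral_abs_sub_toReal_rnDeriv (hac n)
    (withDensity_absolutelyContinuous _ _) hf hM

end SetwiseCauchy

section HeatKernel

variable {d : ℕ} {F : Type*} [NormedAddCommGroup F] [NormedSpace ℝ F]

lemma integral_exp_neg_norm_sub_sq_div (x : EuclideanSpace ℝ (Fin d)) {t : ℝ} (ht : 0 < t) :
    ∫ y : EuclideanSpace ℝ (Fin d), Real.exp (-‖x - y‖ ^ 2 / (2 * t))
      = (2 * Real.pi * t) ^ ((d : ℝ) / 2) := by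
  have hb : 0 < (2 * t)⁻¹ := by positivity
  calc ∫ y : EuclideanSpace ℝ (Fin d), Real.exp (-‖x - y‖ ^ 2 / (2 * t))
      = ∫ y : EuclideanSpace ℝ (Fin d), Real.exp (-(2 * t)⁻¹ * ‖x - y‖ ^ 2) := by
        simp only [div_eq_inv_mul, neg_mul, mul_neg]
    _ = ∫ v : EuclideanSpace ℝ (Fin d), Real.exp (-(2 * t)⁻¹ * ‖v‖ ^ 2) :=
        integral_sub_left_eq_self (fun v => Real.exp (-(2 * t)⁻¹ * ‖v‖ ^ 2)) volume x
    _ = (2 * Real.pi * t) ^ ((d : ℝ) / 2) := by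
        rw [GaussianFourier.integral_rexp_neg_mul_sq_norm hb, finrank_euclideanSpace_fin]
        congr 1
        field_simp

lemma integrable_exp_neg_norm_sub_sq_div (x : EuclideanSpace ℝ (Fin d)) {t : ℝ} (ht : 0 < t) :
    Integrable fun y : EuclideanSpace ℝ (Fin d) => Real.exp (-‖x - y‖ ^ 2 / (2 * t)) :=
  .of_integral_ne_zero <| by rw [integral_exp_neg_norm_sub_sq_div x ht]; positivity

lemma norm_heatSem_le {t M : ℝ} (ht : 0 < t) {f : EuclideanSpace ℝ (Fin d) → F}
    (hf : ∀ y, ‖f y‖ ≤ M) (x : EuclideanSpace ℝ (Fin d)) : ‖heatSem d t f x‖ ≤ M := by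
  have hc : 0 < 2 * Real.pi * t := by positivity
  have hint : ‖∫ y, Real.exp (-‖x - y‖ ^ 2 / (2 * t)) • f y‖
      ≤ ∫ y, Real.exp (-‖x - y‖ ^ 2 / (2 * t)) * M := by
    refine norm_integral_le_of_norm_le ((integrable_exp_neg_norm_sub_sq_div x ht).mul_const M)
      (.of_forall fun y => ?_)
    rw [norm_smul, Real.norm_of_nonneg (Real.exp_pos _).le]
    exact mul_le_mul_of_nonneg_left (hf y) (Real.exp_pos _).le
  rw [integral_mul_const, integral_exp_neg_norm_sub_sq_div x ht] at hint
  rw [heatSem, norm_smul, Real.norm_of_nonneg (Real.rpow_pos_of_pos hc _).le]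
  calc (2 * Real.pi * t) ^ (-(d : ℝ) / 2) * ‖∫ y, Real.exp (-‖x - y‖ ^ 2 / (2 * t)) • f y‖
      ≤ (2 * Real.pi * t) ^ (-(d : ℝ) / 2) * ((2 * Real.pi * t) ^ ((d : ℝ) / 2) * M) := by
        gcongr
    _ = M := by
        rw [← mul_assoc, ← Real.rpow_add hc, neg_div, neg_add_cancel, Real.rpow_zero, one_mul]

end HeatKernel

section Bessel

variable {d : ℕ} {F : Type*} [NormedAddCommGroup F] [NormedSpace ℝ F]

lemma norm_bessel_le {δ M : ℝ} (hδ : 0 ≤ δ) {f : EuclideanSpace ℝ (Fin d) → F}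
    (hf : ∀ y, ‖f y‖ ≤ M) (x : EuclideanSpace ℝ (Fin d)) : ‖bessel d δ f x‖ ≤ M := by
  rcases hδ.eq_or_lt with rfl | hδ
  · simpa [bessel] using hf x
  have hδ2 : 0 < δ / 2 := by positivity
  have hΓ : 0 < Real.Gamma (δ / 2) := Real.Gamma_pos_of_pos hδ2
  have hint : ‖∫ t in Set.Ioi (0:ℝ), (t ^ (δ / 2 - 1) * Real.exp (-t)) • heatSem d t f x‖
      ≤ ∫ t in Set.Ioi (0:ℝ), Real.exp (-t) * t ^ (δ / 2 - 1) * M := by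
    refine norm_integral_le_of_norm_le ((Real.GammaIntegral_convergent hδ2).mul_const M) ?_
    refine (ae_restrict_iff' measurableSet_Ioi).2 (.of_forall fun t (ht : 0 < t) => ?_)
    rw [norm_smul, Real.norm_of_nonneg (by positivity), mul_comm (Real.exp _)]
    exact mul_le_mul_of_nonneg_left (norm_heatSem_le ht hf x) (by positivity)
  rw [integral_mul_const, ← Real.Gamma_eq_integral hδ2] at hint
  rw [bessel, if_neg hδ.ne', norm_smul, Real.norm_of_nonneg (inv_pos.2 hΓ).le]
  calc (Real.Gamma (δ / 2))⁻¹ *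
        ‖∫ t in Set.Ioi (0:ℝ), (t ^ (δ / 2 - 1) * Real.exp (-t)) • heatSem d t f x‖
      ≤ (Real.Gamma (δ / 2))⁻¹ * (Real.Gamma (δ / 2) * M) := by gcongr
    _ = M := by rw [← mul_assoc, inv_mul_cancel₀ hΓ.ne', one_mul]

lemma tildeSobNorm_le_of_norm_le {δ M : ℝ} (hδ : 0 ≤ δ) (k : ℝ≥0∞)
    {f : EuclideanSpace ℝ (Fin d) → F} (hf : ∀ y, ‖f y‖ ≤ M) :
    tildeSobNorm d δ k f ≤
      volume (Metric.closedBall (0 : EuclideanSpace ℝ (Fin d)) 1) ^ k.toReal⁻¹ * .ofReal M := by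
  refine iSup_le fun z => ?_
  rw [eLpNorm_indicator_eq_eLpNorm_restrict measurableSet_closedBall]
  refine (eLpNorm_le_of_ae_bound (.of_forall (norm_bessel_le hδ hf))).trans_eq ?_
  rw [Measure.restrict_apply_univ, Measure.addHaar_closedBall_center]

end Bessel

section DualDistance

variable {d : ℕ} {δ : ℝ} {k : ℝ≥0∞} {α β : Measure (EuclideanSpace ℝ (Fin d))}
  {f : EuclideanSpace ℝ (Fin d) → ℝ}

lemma ofReal_abs_integral_le_dualNorm (hf : Measurable f) (hfb : ∃ M, ∀ x, |f x| ≤ M)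
    (hfs : tildeSobNorm d δ k f ≤ 1) : ENNReal.ofReal |∫ x, f x ∂α| ≤ dualNorm d δ k α :=
  le_iSup_of_le f <| le_iSup_of_le hf <| le_iSup_of_le hfb <| le_iSup_of_le hfs le_rfl

lemma ofReal_abs_integral_sub_le_dualDist (hf : Measurable f) (hfb : ∃ M, ∀ x, |f x| ≤ M)
    (hfs : tildeSobNorm d δ k f ≤ 1) :
    ENNReal.ofReal |∫ x, f x ∂α - ∫ x, f x ∂β| ≤ dualDist d δ k α β :=
  le_iSup_of_le f <| le_iSup_of_le hf <| le_iSup_of_le hfb <| le_iSup_of_le hfs le_rfl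

lemma dualNorm_le_add_dualDist : dualNorm d δ k β ≤ dualNorm d δ k α + dualDist d δ k α β := by
  refine iSup_le fun f => iSup_le fun hf => iSup_le fun hfb => iSup_le fun hfs => ?_
  have htri : |∫ x, f x ∂β| ≤ |∫ x, f x ∂α| + |∫ x, f x ∂α - ∫ x, f x ∂β| := by
    rw [abs_sub_comm]; linarith [abs_sub_abs_le_abs_sub (∫ x, f x ∂β) (∫ x, f x ∂α)]
  calc ENNReal.ofReal |∫ x, f x ∂β|
      ≤ ENNReal.ofReal |∫ x, f x ∂α| + ENNReal.ofReal |∫ x, f x ∂α - ∫ x, f x ∂β| := by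
        rw [← ENNReal.ofReal_add (abs_nonneg _) (abs_nonneg _)]
        exact ENNReal.ofReal_le_ofReal htri
    _ ≤ dualNorm d δ k α + dualDist d δ k α β :=
        add_le_add (ofReal_abs_integral_le_dualNorm hf hfb hfs)
          (ofReal_abs_integral_sub_le_dualDist hf hfb hfs)

/-- The paper's bound `‖α - β‖_var ≤ c ‖α - β‖_{δ,k*}`, tested against one function. -/
lemma ofReal_abs_integral_sub_le_mul_dualDist (hδ : 0 ≤ δ) (hf : Measurable f)
    (hf1 : ∀ x, |f x| ≤ 1) :
    ENNReal.ofReal |∫ x, f x ∂α - ∫ x, f x ∂β| ≤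
      volume (Metric.closedBall (0 : EuclideanSpace ℝ (Fin d)) 1) ^ k.toReal⁻¹ *
        dualDist d δ k α β := by
  set C := volume (Metric.closedBall (0 : EuclideanSpace ℝ (Fin d)) 1) ^ k.toReal⁻¹
  set c := C.toReal
  have hCc : C = ENNReal.ofReal c := (ENNReal.ofReal_toReal
    (ENNReal.rpow_ne_top_of_nonneg (by positivity) measure_closedBall_lt_top.ne)).symm
  have hc : 0 < c := ENNReal.toReal_pos
    (ENNReal.rpow_pos (Metric.measure_closedBall_pos _ _ one_pos)
      measure_closedBall_lt_top.ne).ne' (by rw [hCc]; exact ENNReal.ofReal_ne_top)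
  have hg : ∀ x, ‖c⁻¹ * f x‖ ≤ c⁻¹ := fun x => by
    rw [norm_mul, Real.norm_of_nonneg (inv_pos.2 hc).le, Real.norm_eq_abs]
    exact mul_le_of_le_one_right (inv_pos.2 hc).le (hf1 x)
  have hgs : tildeSobNorm d δ k (fun x => c⁻¹ * f x) ≤ 1 := by
    refine (tildeSobNorm_le_of_norm_le hδ k hg).trans_eq ?_
    change C * _ = 1
    rw [hCc, ← ENNReal.ofReal_mul hc.le, mul_inv_cancel₀ hc.ne', ENNReal.ofReal_one]
  have hgd := ofReal_abs_integral_sub_le_dualDist (α := α) (β := β)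
    (hf.const_mul c⁻¹) ⟨_, fun x => (Real.norm_eq_abs _).symm.trans_le (hg x)⟩ hgs
  calc ENNReal.ofReal |∫ x, f x ∂α - ∫ x, f x ∂β|
      = C * ENNReal.ofReal |∫ x, c⁻¹ * f x ∂α - ∫ x, c⁻¹ * f x ∂β| := by
        rw [hCc, ← ENNReal.ofReal_mul hc.le, integral_const_mul, integral_const_mul, ← mul_sub,
          abs_mul, abs_of_pos (inv_pos.2 hc), mul_inv_cancel_left₀ hc.ne']
    _ ≤ C * dualDist d δ k α β := by gcongr

lemma cauchy_on_sets_of_cauchy_dualDist (hδ : 0 ≤ δ) {μ : ℕ → Measure (EuclideanSpace ℝ (Fin d))}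
    (hcauchy : ∀ ε : ℝ≥0∞, 0 < ε → ∃ N, ∀ m ≥ N, ∀ n ≥ N, dualDist d δ k (μ m) (μ n) < ε) :
    ∀ ε > 0, ∃ N, ∀ m ≥ N, ∀ n ≥ N, ∀ s, MeasurableSet s →
      (μ m).real s - (μ n).real s ≤ ε := by
  intro ε hε
  set C := volume (Metric.closedBall (0 : EuclideanSpace ℝ (Fin d)) 1) ^ k.toReal⁻¹
  have hC0 : C ≠ 0 := (ENNReal.rpow_pos (Metric.measure_closedBall_pos _ _ one_pos)
    measure_closedBall_lt_top.ne).ne'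
  have hC : C ≠ ⊤ := ENNReal.rpow_ne_top_of_nonneg (by positivity) measure_closedBall_lt_top.ne
  obtain ⟨N, hN⟩ := hcauchy (.ofReal ε / C) (ENNReal.div_pos (ofReal_pos.2 hε).ne' hC)
  refine ⟨N, fun m hm n hn s hs => (le_abs_self _).trans <| (ofReal_le_ofReal_iff hε.le).1 ?_⟩
  have hind := ofReal_abs_integral_sub_le_mul_dualDist (α := μ m) (β := μ n) (k := k) hδ
    (measurable_const.indicator hs) (f := s.indicator 1) fun x => by
      by_cases hx : x ∈ s <;> simp [hx]
  rw [integral_indicator_one hs, integral_indicator_one hs] at hind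
  calc _ ≤ C * dualDist d δ k (μ m) (μ n) := hind
    _ ≤ C * (.ofReal ε / C) := by gcongr; exact (hN m hm n hn).le
    _ = .ofReal ε := ENNReal.mul_div_cancel hC0 hC

lemma dualDist_le_of_tendsto_integral {μ : ℕ → Measure (EuclideanSpace ℝ (Fin d))}
    {ν : Measure (EuclideanSpace ℝ (Fin d))} {r : ℝ≥0∞}
    (hconv : ∀ f : EuclideanSpace ℝ (Fin d) → ℝ, Measurable f → (∃ M, ∀ x, |f x| ≤ M) →
      Tendsto (fun n => ∫ x, f x ∂μ n) atTop (𝓝 (∫ x, f x ∂ν)))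
    (hr : ∀ᶠ n in atTop, dualDist d δ k α (μ n) ≤ r) : dualDist d δ k α ν ≤ r := by
  refine iSup_le fun f => iSup_le fun hf => iSup_le fun hfb => iSup_le fun hfs => ?_
  refine le_of_tendsto ((ENNReal.continuous_ofReal.tendsto _).comp
    (tendsto_const_nhds.sub (hconv f hf hfb)).abs) ?_
  exact hr.mono fun n hn => (ofReal_abs_integral_sub_le_dualDist hf hfb hfs).trans hn

end DualDistance

theorem stmt6_general (d : ℕ) (δ : ℝ) (hδ : 0 ≤ δ) (k : ℝ≥0∞)
    (μ : ℕ → Measure (EuclideanSpace ℝ (Fin d)))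
    (hprob : ∀ n, IsProbabilityMeasure (μ n))
    (hfin : ∀ n, dualNorm d δ k (μ n) ≠ ⊤)
    (hcauchy : ∀ ε : ℝ≥0∞, 0 < ε → ∃ N, ∀ m ≥ N, ∀ n ≥ N,
      dualDist d δ k (μ m) (μ n) < ε) :
    ∃ ν : Measure (EuclideanSpace ℝ (Fin d)), IsProbabilityMeasure ν ∧
      dualNorm d δ k ν ≠ ⊤ ∧
      Filter.Tendsto (fun n => dualDist d δ k (μ n) ν) Filter.atTop (nhds 0) := by
  obtain ⟨ν, hν, hconv⟩ := exists_tendsto_integral_of_cauchy_on_sets μ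
    (cauchy_on_sets_of_cauchy_dualDist hδ hcauchy)
  have hlim : ∀ ε > 0, ∃ N, ∀ m ≥ N, dualDist d δ k (μ m) ν ≤ ε := fun ε hε =>
    (hcauchy ε hε).imp fun N hN m hm => dualDist_le_of_tendsto_integral hconv
      (eventually_atTop.2 ⟨N, fun n hn => (hN m hm n hn).le⟩)
  obtain ⟨N, hN⟩ := hlim 1 one_pos
  refine ⟨ν, hν, ne_top_of_le_ne_top (add_ne_top.2 ⟨hfin N, one_ne_top⟩) ?_,
    ENNReal.tendsto_atTop_zero.2 hlim⟩
  calc dualNorm d δ k ν ≤ dualNorm d δ k (μ N) + dualDist d δ k (μ N) ν := dualNorm_le_add_dualDist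
    _ ≤ dualNorm d δ k (μ N) + 1 := by gcongr; exact hN N le_rfl

/-- Completeness of `(𝒫_{δ,k*}, ‖·‖_{δ,k*})`: any Cauchy sequence of probability measures
with finite `‖·‖_{δ,k*}`-norm converges in the `‖·‖_{δ,k*}`-distance to a probability
measure with finite norm. -/
theorem stmt6 (d : ℕ) (δ : ℝ) (hδ : 0 ≤ δ) (k : ℝ≥0∞) (hk : 1 ≤ k)
    (μ : ℕ → Measure (EuclideanSpace ℝ (Fin d)))
    (hprob : ∀ n, IsProbabilityMeasure (μ n))
    (hfin : ∀ n, dualNorm d δ k (μ n) ≠ ⊤)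
    (hcauchy : ∀ ε : ℝ≥0∞, 0 < ε → ∃ N, ∀ m ≥ N, ∀ n ≥ N,
      dualDist d δ k (μ m) (μ n) < ε) :
    ∃ ν : Measure (EuclideanSpace ℝ (Fin d)), IsProbabilityMeasure ν ∧
      dualNorm d δ k ν ≠ ⊤ ∧
      Filter.Tendsto (fun n => dualDist d δ k (μ n) ν) Filter.atTop (nhds 0) :=
  stmt6_general d δ hδ k μ hprob hfin hcauchy
end
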